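/- For B self-adjoint positive with bounded inverse and A self-adjoint bounded, the Fréchet derivative of the operator logarithm satisfies Dlog[B](A) = ∫_0^∞ (B + xI)^{-1} A (B + xI)^{-1} dx. -/

import Mathlib

/-
For a real `y > 0`, `log y = ∫₀^∞ ((1 + x)⁻¹ - (y + x)⁻¹) dx`, since the integrand is the derivative
of `log (1 + x) - log (y + x)`, which tends to `0` at infinity. The continuous functional calculus
commutes with this integral, so `log b = ∫₀^∞ ((1 + x)⁻¹ - (b + x)⁻¹) dx` for every `b ≥ c > 0` in a
unital C⋆-algebra. Subtracting two such representations and applying the resolvent identity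
`(a + x)⁻¹ - (b + x)⁻¹ = (a + x)⁻¹ (b - a) (b + x)⁻¹` shows that the difference quotient of
`t ↦ log (b + t a)` at `0` is exactly `∫₀^∞ (b + x)⁻¹ a (b + t a + x)⁻¹ dx` once `‖t a‖ ≤ c / 2`.
For such `t` the integrand is dominated by `‖a‖ (c / 2 + x)⁻²`, so dominated convergence lets
`t → 0`. The Hilbert-space hypothesis on `B` says exactly that `ε ≤ B` in the Loewner order.
-/

open Filter Set MeasureTheory Topology
open scoped Ring InnerProductSpace

section Scalar

variable {x y : ℝ}

lemma hasDerivAt_log_one_add_sub_log_add (hx : 0 ≤ x) (hy : 0 < y) :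
    HasDerivAt (fun s => Real.log (1 + s) - Real.log (y + s)) ((1 + x)⁻¹ - (y + x)⁻¹) x := by
  have h1 := ((hasDerivAt_id x).const_add 1).log (by simp; linarith)
  have h2 := ((hasDerivAt_id x).const_add y).log (by simp; linarith)
  simp only [id, one_div] at h1 h2
  exact h1.sub h2

lemma tendsto_log_one_add_sub_log_add_atTop (y : ℝ) :
    Tendsto (fun s => Real.log (1 + s) - Real.log (y + s)) atTop (𝓝 0) := by
  have h := (Real.tendsto_log_comp_add_sub_log 1).sub (Real.tendsto_log_comp_add_sub_log y)
  rw [sub_zero] at h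
  refine h.congr fun s => ?_
  rw [add_comm s, add_comm s]
  ring

lemma integrableOn_inv_one_add_sub_inv_add (hy : 0 < y) :
    IntegrableOn (fun x => (1 + x)⁻¹ - (y + x)⁻¹) (Ioi 0) := by
  have hderiv : ∀ x ∈ Ici (0 : ℝ), HasDerivAt _ _ x := fun x hx =>
    hasDerivAt_log_one_add_sub_log_add hx hy
  rcases le_total 1 y with h1y | hy1
  · refine integrableOn_Ioi_deriv_of_nonneg' hderiv (fun x hx => ?_)
      (tendsto_log_one_add_sub_log_add_atTop y)
    exact sub_nonneg.2 (inv_anti₀ (by linarith [mem_Ioi.1 hx]) (by linarith))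
  · refine integrableOn_Ioi_deriv_of_nonpos' hderiv (fun x hx => ?_)
      (tendsto_log_one_add_sub_log_add_atTop y)
    exact sub_nonpos.2 (inv_anti₀ (by linarith [mem_Ioi.1 hx]) (by linarith))

lemma integral_inv_one_add_sub_inv_add (hy : 0 < y) :
    ∫ x in Ioi 0, ((1 + x)⁻¹ - (y + x)⁻¹) = Real.log y := by
  rw [integral_Ioi_of_hasDerivAt_of_tendsto' (fun x hx => hasDerivAt_log_one_add_sub_log_add hx hy)
    (integrableOn_inv_one_add_sub_inv_add hy) (tendsto_log_one_add_sub_log_add_atTop y)]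
  simp

lemma abs_inv_one_add_sub_inv_add_le {c M : ℝ} (hc : 0 < c) (hx : 0 ≤ x) (hy : y ∈ Icc c M) :
    |(1 + x)⁻¹ - (y + x)⁻¹| ≤ |(1 + x)⁻¹ - (c + x)⁻¹| + |(1 + x)⁻¹ - (M + x)⁻¹| := by
  have hcx : 0 < c + x := by linarith
  refine (abs_le_max_abs_abs ?_ ?_).trans (max_le_add_of_nonneg (abs_nonneg _) (abs_nonneg _))
  · exact sub_le_sub_left (inv_anti₀ hcx (by linarith [hy.1])) _
  · exact sub_le_sub_left (inv_anti₀ (by linarith [hy.1]) (by linarith [hy.2])) _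

lemma continuousOn_inv_one_add_sub_inv_add :
    ContinuousOn (Function.uncurry fun x y : ℝ => (1 + x)⁻¹ - (y + x)⁻¹) (Ioi 0 ×ˢ Ioi 0) := by
  intro p hp
  have h1 : 0 < 1 + p.1 := by linarith [hp.1.out]
  have h2 : 0 < p.2 + p.1 := by linarith [hp.1.out, hp.2.out]
  apply ContinuousAt.continuousWithinAt
  show ContinuousAt (fun q : ℝ × ℝ => (1 + q.1)⁻¹ - (q.2 + q.1)⁻¹) p
  fun_prop (disch := positivity)

lemma integrableOn_inv_add_sq {c : ℝ} (hc : 0 < c) :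
    IntegrableOn (fun x : ℝ => (c + x)⁻¹ ^ 2) (Ioi 0) := by
  refine (integrableOn_add_rpow_Ioi_of_lt (a := -2) (m := c) (by norm_num) (by linarith)).congr_fun
    (fun x hx => ?_) measurableSet_Ioi
  dsimp only
  rw [Real.rpow_neg (by linarith [hx.out]), Real.rpow_two, inv_pow, add_comm]

end Scalar

lemma continuousAt_ring_inverse {R X : Type*} [NormedRing R] [HasSummableGeomSeries R]
    [TopologicalSpace X] {f : X → R} {x : X} (hf : ContinuousAt f x) (hu : IsUnit (f x)) :
    ContinuousAt (fun y => (f y)⁻¹ʳ) x := by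
  obtain ⟨u, hu⟩ := hu
  exact (NormedRing.inverse_continuousAt u).comp_of_eq hf hu.symm

section CStarAlgebra

variable {A : Type*} [CStarAlgebra A]

lemma cfc_inv_add_const {x : ℝ} {a : A} (ha : IsSelfAdjoint a)
    (hspec : ∀ y ∈ spectrum ℝ a, y + x ≠ 0) :
    cfc (fun y => (y + x)⁻¹) a = (a + x • 1)⁻¹ʳ := by
  rw [cfc_inv (· + x) a hspec, cfc_add_const x (fun y : ℝ => y) a, cfc_id' ℝ a,
    Algebra.algebraMap_eq_smul_one]

lemma cfc_inv_one_add_sub_inv_add {x : ℝ} {a : A} (ha : IsSelfAdjoint a)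
    (hspec : ∀ y ∈ spectrum ℝ a, y + x ≠ 0) :
    cfc (fun y => (1 + x)⁻¹ - (y + x)⁻¹) a = (1 + x)⁻¹ • 1 - (a + x • 1)⁻¹ʳ := by
  have hcont : ContinuousOn (fun y : ℝ => (y + x)⁻¹) (spectrum ℝ a) :=
    (continuousOn_id.add continuousOn_const).inv₀ hspec
  rw [cfc_sub (fun _ => (1 + x)⁻¹) _ a continuousOn_const hcont, cfc_const _ a,
    Algebra.algebraMap_eq_smul_one, cfc_inv_add_const ha hspec]

variable [PartialOrder A] [StarOrderedRing A]

section AlgebraMapLE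

variable {r : ℝ} {a : A}

lemma isSelfAdjoint_of_algebraMap_le (h : algebraMap ℝ A r ≤ a) : IsSelfAdjoint a := by
  simpa using (IsSelfAdjoint.of_nonneg (sub_nonneg.2 h)).add (.algebraMap A (.all r))

lemma le_of_mem_spectrum_of_algebraMap_le (h : algebraMap ℝ A r ≤ a) :
    ∀ y ∈ spectrum ℝ a, r ≤ y :=
  (algebraMap_le_iff_le_spectrum (isSelfAdjoint_of_algebraMap_le h)).1 h

lemma spectrum_subset_Ioi_of_algebraMap_le (hr : 0 < r) (h : algebraMap ℝ A r ≤ a) :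
    spectrum ℝ a ⊆ Ioi 0 := fun y hy =>
  hr.trans_le (le_of_mem_spectrum_of_algebraMap_le h y hy)

lemma isUnit_of_algebraMap_le (hr : 0 < r) (h : algebraMap ℝ A r ≤ a) : IsUnit a :=
  spectrum.isUnit_of_zero_notMem ℝ fun h0 =>
    (le_of_mem_spectrum_of_algebraMap_le h 0 h0).not_gt hr

lemma norm_ring_inverse_le_of_algebraMap_le (hr : 0 < r) (h : algebraMap ℝ A r ≤ a) :
    ‖a⁻¹ʳ‖ ≤ r⁻¹ := by
  have ha := isSelfAdjoint_of_algebraMap_le h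
  have hspec := le_of_mem_spectrum_of_algebraMap_le h
  rw [← cfc_id ℝ a, ← cfc_inv id a fun y hy => (hr.trans_le (hspec y hy)).ne']
  refine norm_cfc_le (inv_nonneg.2 hr.le) fun y hy => ?_
  rw [Real.norm_eq_abs, id_eq, abs_inv, abs_of_pos (hr.trans_le (hspec y hy))]
  exact inv_anti₀ hr (hspec y hy)

lemma algebraMap_add_le_add_smul_one (h : algebraMap ℝ A r ≤ a) (x : ℝ) :
    algebraMap ℝ A (r + x) ≤ a + x • 1 := by
  rw [map_add, Algebra.algebraMap_eq_smul_one x]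
  exact add_le_add_left h _

lemma algebraMap_sub_le_add_of_norm_le {s : ℝ} {b : A} (hb : algebraMap ℝ A r ≤ b)
    (ha : IsSelfAdjoint a) (has : ‖a‖ ≤ s) : algebraMap ℝ A (r - s) ≤ b + a := by
  have h1 : -algebraMap ℝ A s ≤ a := by
    refine le_trans ?_ ha.neg_algebraMap_norm_le_self
    rw [neg_le_neg_iff]
    exact algebraMap_mono A has
  rw [map_sub, sub_eq_add_neg]
  exact add_le_add hb h1

end AlgebraMapLE

section Resolvent

variable {c x : ℝ} {a b : A}

lemma isUnit_add_smul_one (hc : 0 < c) (ha : algebraMap ℝ A c ≤ a) (hx : 0 ≤ x) :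
    IsUnit (a + x • 1) :=
  isUnit_of_algebraMap_le (by linarith) (algebraMap_add_le_add_smul_one ha x)

lemma norm_ring_inverse_add_smul_one_le (hc : 0 < c) (ha : algebraMap ℝ A c ≤ a) (hx : 0 ≤ x) :
    ‖(a + x • 1)⁻¹ʳ‖ ≤ (c + x)⁻¹ :=
  norm_ring_inverse_le_of_algebraMap_le (by linarith) (algebraMap_add_le_add_smul_one ha x)

lemma continuousOn_ring_inverse_add_smul_one (hc : 0 < c) (ha : algebraMap ℝ A c ≤ a) :
    ContinuousOn (fun x : ℝ => (a + x • 1)⁻¹ʳ) (Ioi 0) := fun x hx =>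
  (continuousAt_ring_inverse (f := fun x : ℝ => a + x • 1) (by fun_prop)
    (isUnit_add_smul_one hc ha hx.out.le)).continuousWithinAt

lemma norm_ring_inverse_mul_mul_ring_inverse_le (w : A) (hc : 0 < c) (ha : algebraMap ℝ A c ≤ a)
    (hb : algebraMap ℝ A c ≤ b) (hx : 0 ≤ x) :
    ‖(a + x • 1)⁻¹ʳ * w * (b + x • 1)⁻¹ʳ‖ ≤ ‖w‖ * (c + x)⁻¹ ^ 2 := by
  have ha' := norm_ring_inverse_add_smul_one_le hc ha hx
  have hb' := norm_ring_inverse_add_smul_one_le hc hb hx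
  calc ‖(a + x • 1)⁻¹ʳ * w * (b + x • 1)⁻¹ʳ‖
      ≤ ‖(a + x • 1)⁻¹ʳ‖ * ‖w‖ * ‖(b + x • 1)⁻¹ʳ‖ := norm_mul₃_le
    _ ≤ (c + x)⁻¹ * ‖w‖ * (c + x)⁻¹ := by gcongr
    _ = ‖w‖ * (c + x)⁻¹ ^ 2 := by ring

end Resolvent

section LogIntegral

variable {c : ℝ} {a b : A}

lemma norm_inv_one_add_sub_inv_add_le (hc : 0 < c) (ha : algebraMap ℝ A c ≤ a) {x : ℝ}
    (hx : 0 ≤ x) : ∀ y ∈ spectrum ℝ a, ‖(1 + x)⁻¹ - (y + x)⁻¹‖ ≤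
      |(1 + x)⁻¹ - (c + x)⁻¹| + |(1 + x)⁻¹ - (max c ‖a‖ + x)⁻¹| := fun y hy =>
  abs_inv_one_add_sub_inv_add_le hc hx ⟨le_of_mem_spectrum_of_algebraMap_le ha y hy,
    le_max_of_le_right <| (le_algebraMap_iff_spectrum_le (isSelfAdjoint_of_algebraMap_le ha)).1
      (isSelfAdjoint_of_algebraMap_le ha).le_algebraMap_norm_self y hy⟩

lemma integrableOn_cfc_inv_one_add_sub_inv_add (hc : 0 < c) (ha : algebraMap ℝ A c ≤ a) :
    IntegrableOn (fun x : ℝ => cfc (fun y => (1 + x)⁻¹ - (y + x)⁻¹) a) (Ioi 0) := by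
  have hM : 0 < max c ‖a‖ := lt_max_of_lt_left hc
  refine integrableOn_cfc measurableSet_Ioi _
    (fun x => |(1 + x)⁻¹ - (c + x)⁻¹| + |(1 + x)⁻¹ - (max c ‖a‖ + x)⁻¹|) a ?_ ?_ ?_
    (isSelfAdjoint_of_algebraMap_le ha)
  · exact continuousOn_inv_one_add_sub_inv_add.mono
      (prod_mono subset_rfl (spectrum_subset_Ioi_of_algebraMap_le hc ha))
  · exact ae_restrict_of_forall_mem measurableSet_Ioi fun x hx =>
      norm_inv_one_add_sub_inv_add_le hc ha (le_of_lt hx)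
  · exact ((integrableOn_inv_one_add_sub_inv_add hc).abs.add
      (integrableOn_inv_one_add_sub_inv_add hM).abs).hasFiniteIntegral

lemma eqOn_cfc_inv_one_add_sub_inv_add (hc : 0 < c) (ha : algebraMap ℝ A c ≤ a) :
    EqOn (fun x : ℝ => cfc (fun y => (1 + x)⁻¹ - (y + x)⁻¹) a)
      (fun x => (1 + x)⁻¹ • 1 - (a + x • 1)⁻¹ʳ) (Ioi 0) := fun _ hx =>
  cfc_inv_one_add_sub_inv_add (isSelfAdjoint_of_algebraMap_le ha) fun _ hy =>
    (add_pos (spectrum_subset_Ioi_of_algebraMap_le hc ha hy) hx).ne'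

lemma integrableOn_inv_one_add_smul_one_sub_ring_inverse (hc : 0 < c)
    (ha : algebraMap ℝ A c ≤ a) :
    IntegrableOn (fun x : ℝ => (1 + x)⁻¹ • (1 : A) - (a + x • 1)⁻¹ʳ) (Ioi 0) :=
  (integrableOn_cfc_inv_one_add_sub_inv_add hc ha).congr_fun
    (eqOn_cfc_inv_one_add_sub_inv_add hc ha) measurableSet_Ioi

lemma cfc_log_eq_integral (hc : 0 < c) (ha : algebraMap ℝ A c ≤ a) :
    cfc Real.log a = ∫ x in Ioi (0 : ℝ), ((1 + x)⁻¹ • (1 : A) - (a + x • 1)⁻¹ʳ) := by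
  have hM : 0 < max c ‖a‖ := lt_max_of_lt_left hc
  have hspec := spectrum_subset_Ioi_of_algebraMap_le hc ha
  calc cfc Real.log a = cfc (fun y => ∫ x in Ioi 0, ((1 + x)⁻¹ - (y + x)⁻¹)) a :=
        cfc_congr fun y hy => (integral_inv_one_add_sub_inv_add (hspec hy)).symm
    _ = ∫ x in Ioi (0 : ℝ), cfc (fun y => (1 + x)⁻¹ - (y + x)⁻¹) a := by
        refine cfc_setIntegral measurableSet_Ioi _
          (fun x => |(1 + x)⁻¹ - (c + x)⁻¹| + |(1 + x)⁻¹ - (max c ‖a‖ + x)⁻¹|) a ?_ ?_ ?_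
          (isSelfAdjoint_of_algebraMap_le ha)
        · exact continuousOn_inv_one_add_sub_inv_add.mono (prod_mono subset_rfl hspec)
        · exact ae_restrict_of_forall_mem measurableSet_Ioi fun x hx =>
            norm_inv_one_add_sub_inv_add_le hc ha (le_of_lt hx)
        · exact ((integrableOn_inv_one_add_sub_inv_add hc).abs.add
            (integrableOn_inv_one_add_sub_inv_add hM).abs).hasFiniteIntegral
    _ = _ := setIntegral_congr_fun measurableSet_Ioi (eqOn_cfc_inv_one_add_sub_inv_add hc ha)

lemma cfc_log_sub_cfc_log (hc : 0 < c) (ha : algebraMap ℝ A c ≤ a) (hb : algebraMap ℝ A c ≤ b) :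
    cfc Real.log b - cfc Real.log a =
      ∫ x in Ioi (0 : ℝ), (a + x • 1)⁻¹ʳ * (b - a) * (b + x • 1)⁻¹ʳ := by
  rw [cfc_log_eq_integral hc ha, cfc_log_eq_integral hc hb, ← integral_sub
    (integrableOn_inv_one_add_smul_one_sub_ring_inverse hc hb)
    (integrableOn_inv_one_add_smul_one_sub_ring_inverse hc ha)]
  refine setIntegral_congr_fun measurableSet_Ioi fun x hx => ?_
  rw [sub_sub_sub_cancel_left, Ring.inverse_sub_inverse (iff_of_true
    (isUnit_add_smul_one hc ha hx.out.le) (isUnit_add_smul_one hc hb hx.out.le))]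
  congr 2
  abel

end LogIntegral

section Derivative

variable {c : ℝ} {a b : A}

lemma eventually_algebraMap_le_add_smul (hc : 0 < c) (hb : algebraMap ℝ A c ≤ b)
    (ha : IsSelfAdjoint a) : ∀ᶠ t : ℝ in 𝓝 0, algebraMap ℝ A (c / 2) ≤ b + t • a := by
  have hsmall : ∀ᶠ t : ℝ in 𝓝 0, ‖t • a‖ ≤ c / 2 :=
    (continuous_id.smul continuous_const).norm.tendsto' 0 0 (by simp) |>.eventually
      (ge_mem_nhds (half_pos hc))
  filter_upwards [hsmall] with t ht
  simpa [sub_half] using algebraMap_sub_le_add_of_norm_le hb ((IsSelfAdjoint.all t).smul ha) ht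

theorem hasDerivAt_cfc_log_add_smul (hc : 0 < c) (hb : algebraMap ℝ A c ≤ b)
    (ha : IsSelfAdjoint a) :
    HasDerivAt (fun t : ℝ => cfc Real.log (b + t • a))
      (∫ x in Ioi (0 : ℝ), (b + x • 1)⁻¹ʳ * a * (b + x • 1)⁻¹ʳ) 0 := by
  set F : ℝ → ℝ → A := fun t x => (b + x • 1)⁻¹ʳ * a * (b + t • a + x • 1)⁻¹ʳ
  have hc2 : 0 < c / 2 := half_pos hc
  have hnear := eventually_algebraMap_le_add_smul hc hb ha
  have hb2 : algebraMap ℝ A (c / 2) ≤ b := by simpa using hnear.self_of_nhds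
  have hslope : ∀ᶠ t in 𝓝[≠] (0 : ℝ),
      ∫ x in Ioi (0 : ℝ), F t x = t⁻¹ • (cfc Real.log (b + t • a) - cfc Real.log b) := by
    filter_upwards [nhdsWithin_le_nhds hnear, self_mem_nhdsWithin] with t ht ht0
    rw [cfc_log_sub_cfc_log hc2 hb2 ht, add_sub_cancel_left, ← integral_smul]
    refine integral_congr_ae (ae_of_all _ fun x => ?_)
    simp only [F, mul_smul_comm, smul_mul_assoc, smul_smul, inv_mul_cancel₀ ht0, one_smul]
  have hcont : ContinuousAt (fun t => ∫ x in Ioi (0 : ℝ), F t x) 0 := by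
    refine continuousAt_of_dominated (bound := fun x => ‖a‖ * (c / 2 + x)⁻¹ ^ 2) ?_ ?_
      ((integrableOn_inv_add_sq hc2).const_mul _) ?_
    · filter_upwards [hnear] with t ht
      exact (((continuousOn_ring_inverse_add_smul_one hc2 hb2).mul continuousOn_const).mul
        (continuousOn_ring_inverse_add_smul_one hc2 ht)).aestronglyMeasurable measurableSet_Ioi
    · filter_upwards [hnear] with t ht
      exact ae_restrict_of_forall_mem measurableSet_Ioi fun x hx =>
        norm_ring_inverse_mul_mul_ring_inverse_le a hc2 hb2 ht hx.out.le
    · refine ae_restrict_of_forall_mem measurableSet_Ioi fun x hx => ?_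
      refine continuousAt_const.mul (continuousAt_ring_inverse (by fun_prop) ?_)
      simpa using isUnit_add_smul_one hc hb hx.out.le
  rw [hasDerivAt_iff_tendsto_slope_zero]
  simpa [F] using ((hcont.tendsto.mono_left nhdsWithin_le_nhds).congr' hslope)

end Derivative

end CStarAlgebra

lemma algebraMap_le_of_mul_norm_sq_le_re_inner {H : Type*} [NormedAddCommGroup H]
    [InnerProductSpace ℂ H] [CompleteSpace H] {T : H →L[ℂ] H} (hT : IsSelfAdjoint T) {c : ℝ}
    (h : ∀ x : H, c * ‖x‖ ^ 2 ≤ (inner ℂ x (T x) : ℂ).re) :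
    algebraMap ℝ (H →L[ℂ] H) c ≤ T := by
  rw [ContinuousLinearMap.le_def, ContinuousLinearMap.isPositive_def']
  refine ⟨hT.sub (.algebraMap _ (.all c)), fun x => ?_⟩
  have hcx : (⟪c • x, x⟫_ℂ).re = c * ‖x‖ ^ 2 := by
    rw [RCLike.real_smul_eq_coe_smul (K := ℂ), inner_smul_real_left, Complex.real_smul,
      Complex.re_ofReal_mul, ← RCLike.re_to_complex, inner_self_eq_norm_sq]
  have hx := h x
  rw [← RCLike.re_to_complex, inner_re_symm, RCLike.re_to_complex] at hx
  simpa [ContinuousLinearMap.reApplyInnerSelf, Algebra.algebraMap_eq_smul_one, inner_sub_left,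
    hcx] using hx

/-- for a bounded self-adjoint operator `B` that is positive with bounded inverse,
and `A` bounded self-adjoint, the Fréchet derivative of the operator logarithm satisfies
`Dlog[B](A) = ∫_0^∞ (B + xI)⁻¹ A (B + xI)⁻¹ dx` (convergence in operator norm). -/
theorem frechet_log_operator_integral {H : Type*} [NormedAddCommGroup H]
    [InnerProductSpace ℂ H] [CompleteSpace H] (A B : H →L[ℂ] H)
    (hA : IsSelfAdjoint A) (hB : IsSelfAdjoint B)
    (hBpos : ∃ ε : ℝ, 0 < ε ∧ ∀ x : H, ε * ‖x‖ ^ 2 ≤ (inner ℂ x (B x) : ℂ).re) :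
    Tendsto (fun t : ℝ => t⁻¹ • (cfc Real.log (B + t • A) - cfc Real.log B))
      (nhdsWithin 0 {0}ᶜ)
      (nhds (∫ x in Set.Ioi (0 : ℝ),
        Ring.inverse (B + (x : ℝ) • (1 : H →L[ℂ] H)) * A *
          Ring.inverse (B + (x : ℝ) • (1 : H →L[ℂ] H)))) := by
  obtain ⟨ε, hε, hBε⟩ := hBpos
  simpa using (hasDerivAt_cfc_log_add_smul hε
    (algebraMap_le_of_mul_norm_sq_le_re_inner hB hBε) hA).tendsto_slope_zero
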